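/- arXiv:1306.5873 — 3 statements merged into one kernel-verified Lean document; each statement's English description precedes it below -/
import Mathlib

section
/- For every complex z with |z| < π/2, |tan z| ≤ tan|z|. -/
/-!
Since `tan' = 1 + tan ^ 2`, the `n`-th derivative of `tan` is `Pₙ(tan)` for a polynomial `Pₙ`
with natural coefficients, so the Taylor coefficients `Pₙ(0) / n!` of `tan` at `0` are
nonnegative. Inside the disc of convergence `|z| < π / 2` the triangle inequality then gives
`|tan z| ≤ ∑ Pₙ(0) |z|ⁿ / n! = tan |z|`.
-/

open Polynomial
open scoped Nat ComplexOrder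

noncomputable def tanDerivPoly : ℕ → ℕ[X]
  | 0 => X
  | n + 1 => derivative (tanDerivPoly n) * (1 + X ^ 2)

namespace Complex

/-- The inequality is in `ComplexOrder`, so it also says that `f ‖z‖` is real. -/
theorem ofReal_norm_le_of_iteratedDeriv_nonneg {f : ℂ → ℂ} {r : ℝ}
    (hf : DifferentiableOn ℂ f (Metric.ball 0 r)) (hcoeff : ∀ n, 0 ≤ iteratedDeriv n f 0)
    {z : ℂ} (hz : ‖z‖ < r) : (‖f z‖ : ℂ) ≤ f ‖z‖ := by
  set a : ℕ → ℝ := fun n ↦ (n ! : ℝ)⁻¹ * ‖z‖ ^ n * ‖iteratedDeriv n f 0‖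
  have hsum_z := hasSum_taylorSeries_on_ball hf (mem_ball_zero_iff.2 hz)
  have hsum_norm : HasSum (fun n ↦ (a n : ℂ)) (f ‖z‖) := by
    refine (hasSum_taylorSeries_on_ball hf (z := ‖z‖) (by simpa using hz)).congr_fun fun n ↦ ?_
    conv_rhs => rw [eq_coe_norm_of_nonneg (hcoeff n)]
    push_cast [a]
    ring
  have hsum_re : HasSum a (f ‖z‖).re := by simpa using hasSum_re hsum_norm
  rw [hsum_norm.unique (hasSum_ofReal.2 hsum_re), real_le_real]
  refine hsum_z.norm_le_of_bounded hsum_re fun n ↦ ?_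
  simp [a, mul_assoc]

theorem cos_ne_zero_of_norm_lt {z : ℂ} (hz : ‖z‖ < Real.pi / 2) : cos z ≠ 0 := by
  refine cos_ne_zero_iff.2 fun k hk ↦ hz.not_ge ?_
  have hk1 : (1 : ℝ) ≤ |2 * (k : ℝ) + 1| := by
    exact_mod_cast Int.one_le_abs (by omega : 2 * k + 1 ≠ 0)
  rw [hk, show ((2 * k + 1) * Real.pi / 2 : ℂ) = ((2 * k + 1 : ℝ) * (Real.pi / 2) : ℝ) by
    push_cast; ring, norm_real, Real.norm_eq_abs, abs_mul, abs_of_pos Real.pi_div_two_pos]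
  exact le_mul_of_one_le_left Real.pi_div_two_pos.le hk1

theorem differentiableOn_tan_ball : DifferentiableOn ℂ tan (Metric.ball 0 (Real.pi / 2)) :=
  fun _ hz ↦ (differentiableAt_tan.2 (cos_ne_zero_of_norm_lt (mem_ball_zero_iff.1 hz)))
    |>.differentiableWithinAt

theorem iteratedDeriv_tan (n : ℕ) {z : ℂ} (hz : cos z ≠ 0) :
    iteratedDeriv n tan z = aeval (tan z) (tanDerivPoly n) := by
  induction n generalizing z with
  | zero => simp [tanDerivPoly]
  | succ n ih =>
    have hopen : IsOpen {w : ℂ | cos w ≠ 0} := isOpen_ne_fun continuous_cos continuous_const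
    have heq : iteratedDeriv n tan =ᶠ[nhds z] fun w ↦ aeval (tan w) (tanDerivPoly n) :=
      Filter.eventually_of_mem (hopen.mem_nhds hz) fun _ ↦ ih
    have hderiv : HasDerivAt (fun w ↦ aeval (tan w) (tanDerivPoly n))
        (aeval (tan z) (derivative (tanDerivPoly n)) * (1 / cos z ^ 2)) z :=
      ((tanDerivPoly n).hasDerivAt_aeval (tan z)).comp z (hasDerivAt_tan hz)
    rw [iteratedDeriv_succ, heq.deriv_eq, hderiv.deriv, tanDerivPoly, map_mul, one_div,
      ← inv_one_add_tan_sq hz, inv_inv]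
    simp

theorem iteratedDeriv_tan_zero_nonneg (n : ℕ) : 0 ≤ iteratedDeriv n tan 0 := by
  rw [iteratedDeriv_tan n (by simp), tan_zero, ← coeff_zero_eq_aeval_zero']
  simp

end Complex

/-- For every complex `z` with `|z| < π/2`, `|tan z| ≤ tan |z|`. -/
theorem abs_tan_le (z : ℂ) (hz : ‖z‖ < Real.pi / 2) :
    ‖Complex.tan z‖ ≤ Real.tan ‖z‖ := by
  have h := Complex.ofReal_norm_le_of_iteratedDeriv_nonneg Complex.differentiableOn_tan_ball
    Complex.iteratedDeriv_tan_zero_nonneg hz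
  rwa [← Complex.ofReal_tan, Complex.real_le_real] at h
end

section
/- For every complex z with |z| < π/2, |sec z| ≤ sec|z|, i.e., |1/cos z| ≤ 1/cos|z|. -/
/-- For every complex `z` with `|z| < π/2`, `|1 / cos z| ≤ 1 / cos |z|`. -/
theorem abs_sec_le (z : ℂ) (hz : ‖z‖ < Real.pi / 2) :
    ‖1 / Complex.cos z‖ ≤ 1 / Real.cos ‖z‖ := by
  have hre : |z.re| ≤ ‖z‖ := Complex.abs_re_le_norm z
  have hre2 : |z.re| < Real.pi / 2 := lt_of_le_of_lt hre hz
  -- cos (abs z) ≤ cos z.re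
  have hc1 : Real.cos (‖z‖) ≤ Real.cos z.re := by
    rw [← Real.cos_abs z.re]
    apply Real.cos_le_cos_of_nonneg_of_le_pi (abs_nonneg _)
      (le_trans hz.le (by linarith [Real.pi_pos])) hre
  have hcre_pos : 0 < Real.cos z.re := by
    apply Real.cos_pos_of_mem_Ioo
    constructor <;> [linarith [abs_nonneg z.re, neg_abs_le z.re]; linarith [le_abs_self z.re]]
  have hcabs_pos : 0 < Real.cos (‖z‖) :=
    Real.cos_pos_of_mem_Ioo ⟨by linarith [Real.pi_pos, norm_nonneg z], hz⟩
  -- (cos z).re = cos z.re * cosh z.im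
  have hreeq : (Complex.cos z).re = Real.cos z.re * Real.cosh z.im := by
    rw [Complex.cos_eq]
    simp [Complex.cos_ofReal_re, Complex.cosh_ofReal_re]
  have hkey : Real.cos (‖z‖) ≤ ‖Complex.cos z‖ := by
    calc Real.cos (‖z‖) ≤ Real.cos z.re := hc1
    _ ≤ Real.cos z.re * Real.cosh z.im := by
        nlinarith [Real.one_le_cosh z.im]
    _ = (Complex.cos z).re := hreeq.symm
    _ ≤ |(Complex.cos z).re| := le_abs_self _
    _ ≤ ‖Complex.cos z‖ := Complex.abs_re_le_norm _
  rw [norm_div, norm_one]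
  exact one_div_le_one_div_of_le hcabs_pos hkey
end

section
/- Define sn(z, m) for m ∈ [0,1] as the inverse function of the incomplete elliptic integral u ↦ ∫₀^u dt/√((1−t²)(1−m t²)) on a neighborhood of 0. Then for real u with 0 ≤ u < π/2 and m₁ ∈ [0,1], sn(u, m₁)/cn(u, m₁) ≤ tan u, where cn = √(1 − sn²). -/
noncomputable section

/-- The incomplete elliptic integral of the first kind (in Jacobi form),
`ellF m x = ∫₀^x dt / √((1 - t²)(1 - m t²))`. -/
def ellF (m x : ℝ) : ℝ := ∫ t in (0:ℝ)..x, 1 / Real.sqrt ((1 - t ^ 2) * (1 - m * t ^ 2))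

/-- The Jacobi elliptic function `sn(u, m)`, defined as the inverse function of the
incomplete elliptic integral `x ↦ ellF m x` (on a neighborhood of `0`). -/
def sn (u m : ℝ) : ℝ := Function.invFun (ellF m) u

/-- The Jacobi elliptic function `cn(u, m) = √(1 - sn(u,m)²)`. -/
def cn (u m : ℝ) : ℝ := Real.sqrt (1 - sn u m ^ 2)

end

/-!
For `0 ≤ m ≤ 1` and `0 ≤ t < 1` the integrand of `ellF m` dominates that of `ellF 0 = arcsin`,
so `arcsin x ≤ ellF m x` on `[0, 1)`. This gives `ellF m (sin u) ≥ u`, hence by the intermediate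
value theorem `u` lies in the range of `ellF m` and `x = sn u m` satisfies `ellF m x = u`; then
`arcsin x ≤ u`, i.e. `x ≤ sin u`, and `x / √(1 - x²)` is increasing in `x`.
-/

open Real Set

lemma ellF_integrand_pos {m t : ℝ} (hm : m ≤ 1) (ht : t ∈ Ioo (-1) 1) :
    0 < (1 - t ^ 2) * (1 - m * t ^ 2) := by
  have ht2 : t ^ 2 < 1 := by nlinarith [ht.1, ht.2]
  have hmt2 : m * t ^ 2 < 1 := by nlinarith [sq_nonneg t]
  exact mul_pos (by linarith) (by linarith)

lemma intervalIntegrable_ellF_integrand {m a b : ℝ} (hm : m ≤ 1)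
    (ha : a ∈ Ioo (-1) 1) (hb : b ∈ Ioo (-1) 1) :
    IntervalIntegrable (fun t : ℝ => 1 / √((1 - t ^ 2) * (1 - m * t ^ 2))) MeasureTheory.volume
      a b := by
  refine ContinuousOn.intervalIntegrable (continuousOn_const.div (by fun_prop) ?_)
  intro t ht
  exact (sqrt_pos.mpr (ellF_integrand_pos hm (ordConnected_Ioo.uIcc_subset ha hb ht))).ne'

lemma ellF_zero_eq_arcsin {x : ℝ} (hx : x ∈ Ioo (-1) 1) : ellF 0 x = arcsin x := by
  have h0 : (0 : ℝ) ∈ Ioo (-1) 1 := by norm_num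
  have hderiv : ∀ t ∈ uIcc 0 x, HasDerivAt arcsin (1 / √((1 - t ^ 2) * (1 - 0 * t ^ 2))) t := by
    intro t ht
    have ht' := ordConnected_Ioo.uIcc_subset h0 hx ht
    simpa using hasDerivAt_arcsin ht'.1.ne' ht'.2.ne
  rw [ellF, intervalIntegral.integral_eq_sub_of_hasDerivAt hderiv
    (intervalIntegrable_ellF_integrand zero_le_one h0 hx), arcsin_zero, sub_zero]

lemma ellF_le_ellF_of_le {m m' x : ℝ} (hmm' : m ≤ m') (hm' : m' ≤ 1) (hx0 : 0 ≤ x)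
    (hx1 : x < 1) : ellF m x ≤ ellF m' x := by
  have h0 : (0 : ℝ) ∈ Ioo (-1) 1 := by norm_num
  have hx : x ∈ Ioo (-1) 1 := ⟨by linarith, hx1⟩
  refine intervalIntegral.integral_mono_on hx0
    (intervalIntegrable_ellF_integrand (hmm'.trans hm') h0 hx)
    (intervalIntegrable_ellF_integrand hm' h0 hx) fun t ht => ?_
  have ht' : t ∈ Ioo (-1) 1 := ⟨by linarith [ht.1], by linarith [ht.2]⟩
  have ht2 : 0 ≤ 1 - t ^ 2 := by nlinarith [ht'.1, ht'.2]
  refine one_div_le_one_div_of_le (sqrt_pos.mpr (ellF_integrand_pos hm' ht')) (sqrt_le_sqrt ?_)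
  nlinarith [mul_nonneg ht2 (mul_nonneg (sub_nonneg.mpr hmm') (sq_nonneg t))]

lemma arcsin_le_ellF {m x : ℝ} (hm0 : 0 ≤ m) (hm1 : m ≤ 1) (hx0 : 0 ≤ x) (hx1 : x < 1) :
    arcsin x ≤ ellF m x :=
  ellF_zero_eq_arcsin ⟨by linarith, hx1⟩ ▸ ellF_le_ellF_of_le hm0 hm1 hx0 hx1

lemma continuousOn_ellF {m y : ℝ} (hm : m ≤ 1) (hy0 : 0 ≤ y) (hy1 : y < 1) :
    ContinuousOn (ellF m) (Icc 0 y) := by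
  rw [← uIcc_of_le hy0]
  refine intervalIntegral.continuousOn_primitive_interval ?_
  rw [uIcc_of_le hy0, ← intervalIntegrable_iff_integrableOn_Icc_of_le hy0]
  exact intervalIntegrable_ellF_integrand hm (by norm_num) ⟨by linarith, hy1⟩

lemma exists_ellF_eq {m u : ℝ} (hm0 : 0 ≤ m) (hm1 : m ≤ 1) (hu0 : 0 ≤ u) (hu : u < π / 2) :
    ∃ x, ellF m x = u := by
  have hsin0 : 0 ≤ sin u := sin_nonneg_of_nonneg_of_le_pi hu0 (by linarith [pi_pos])
  have hsin1 : sin u < 1 := by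
    simpa [sin_pi_div_two] using sin_lt_sin_of_lt_of_le_pi_div_two (by linarith) le_rfl hu
  have hle : u ≤ ellF m (sin u) := by
    simpa [arcsin_sin (by linarith) hu.le] using arcsin_le_ellF hm0 hm1 hsin0 hsin1
  have hmem : u ∈ Icc (ellF m 0) (ellF m (sin u)) := ⟨by simpa [ellF] using hu0, hle⟩
  obtain ⟨x, -, hx⟩ := intermediate_value_Icc hsin0 (continuousOn_ellF hm1 hsin0 hsin1) hmem
  exact ⟨x, hx⟩

lemma ellF_sn {m u : ℝ} (hm0 : 0 ≤ m) (hm1 : m ≤ 1) (hu0 : 0 ≤ u) (hu : u < π / 2) :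
    ellF m (sn u m) = u :=
  Function.invFun_eq (exists_ellF_eq hm0 hm1 hu0 hu)

lemma sn_le_sin {m u : ℝ} (hm0 : 0 ≤ m) (hm1 : m ≤ 1) (hu0 : 0 ≤ u) (hu : u < π / 2)
    (hsn : sn u m < 1) : sn u m ≤ sin u := by
  rcases lt_or_ge (sn u m) 0 with hneg | hnonneg
  · exact hneg.le.trans (sin_nonneg_of_nonneg_of_le_pi hu0 (by linarith [pi_pos]))
  · rw [← arcsin_le_iff_le_sin' ⟨by linarith [pi_pos], hu⟩]
    simpa [ellF_sn hm0 hm1 hu0 hu] using arcsin_le_ellF hm0 hm1 hnonneg hsn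

lemma div_sqrt_one_sub_sq_le_tan {x u : ℝ} (hu0 : 0 ≤ u) (hu : u < π / 2) (hx : x ≤ sin u) :
    x / √(1 - x ^ 2) ≤ tan u := by
  have htan : 0 ≤ tan u := tan_nonneg_of_nonneg_of_le_pi_div_two hu0 hu.le
  rcases le_or_gt x 0 with hx0 | hx0
  · exact (div_nonpos_of_nonpos_of_nonneg hx0 (sqrt_nonneg _)).trans htan
  have hcos : 0 < cos u := cos_pos_of_mem_Ioo ⟨by linarith [pi_pos], hu⟩
  have hcos_le : cos u ≤ √(1 - x ^ 2) := by
    rw [cos_eq_sqrt_one_sub_sin_sq (by linarith [pi_pos]) hu.le]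
    exact sqrt_le_sqrt (by nlinarith)
  rw [tan_eq_sin_div_cos]
  exact div_le_div₀ (hx0.le.trans hx) hx hcos hcos_le

/-- For `0 ≤ u < π/2` and `m₁ ∈ [0,1]`, `sn(u,m₁)/cn(u,m₁) ≤ tan u`. -/
theorem sc_le_tan (u : ℝ) (hu0 : 0 ≤ u) (hu : u < Real.pi / 2)
    (m₁ : ℝ) (hm₁ : m₁ ∈ Set.Icc (0:ℝ) 1) :
    sn u m₁ / cn u m₁ ≤ Real.tan u := by
  obtain ⟨hm0, hm1⟩ := hm₁
  rcases lt_or_ge (sn u m₁) 1 with hsn | hsn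
  · exact div_sqrt_one_sub_sq_le_tan hu0 hu (sn_le_sin hm0 hm1 hu0 hu hsn)
  · have hcn : cn u m₁ = 0 := sqrt_eq_zero_of_nonpos (by nlinarith)
    rw [hcn, div_zero]
    exact tan_nonneg_of_nonneg_of_le_pi_div_two hu0 hu.le
end
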